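/- Let V be a finite-dimensional complex vector space, g a non-degenerate bilinear form on V (with invertible Gram matrix), g⁽²⁾ the induced non-degenerate bilinear form on V ⊗ V, and P : V ⊗ V → V ⊗ V a g⁽²⁾-self-adjoint idempotent with range S. Define Φ : Hom(V, S) → Hom(S, V) by Φ(L) = (id ⊗ g)∘(L ⊗ id)∘P restricted to S (where (id⊗g)(v⊗w⊗u) = g(w⊗u)·v), assuming additionally σL = L on S for relevant L so that Φ(L) = (id⊗g)(L⊗id)P. Then Φ is a linear isomorphism if and only if the map P₂₃ = id_V ⊗ P restricts to a linear isomorphism from S ⊗ V onto V ⊗ S inside V ⊗ V ⊗ V. -/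

import Mathlib

/-! The non-degenerate form `g` identifies `V` with `V*`. Since `P` is `g⁽²⁾`-self-adjoint and
idempotent, `g⁽²⁾(s, y) = g⁽²⁾(s, P y)` for `s ∈ S`, so `g⁽²⁾` stays non-degenerate on `S = range P`
and identifies `S` with `S*`. These identifications turn `Hom(V, S)` into `S ⊗ V` and `Hom(S, V)`
into `V ⊗ S`, and in these coordinates `Φ` becomes the corestriction `S ⊗ V → V ⊗ S` of `P₂₃`:
self-adjointness moves the `P` in `Φ(L)` from the argument onto the tensor `L`. Since `S ⊗ V` and
`V ⊗ S` embed in `V ⊗ V ⊗ V` (vector spaces are flat), bijectivity of this corestriction is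
bijectivity of `P₂₃` from `S ⊗ V` onto `V ⊗ S`. -/

open scoped TensorProduct

/-- The contraction `(id ⊗ g) : (V ⊗ V) ⊗ V → V`, `(v ⊗ w) ⊗ u ↦ g(w ⊗ u) • v`. -/
noncomputable def contract {V : Type} [AddCommGroup V] [Module ℂ V]
    (g : V ⊗[ℂ] V →ₗ[ℂ] ℂ) : (V ⊗[ℂ] V) ⊗[ℂ] V →ₗ[ℂ] V :=
  (TensorProduct.rid ℂ V).toLinearMap ∘ₗ (TensorProduct.map LinearMap.id g) ∘ₗ
    (TensorProduct.assoc ℂ V V V).toLinearMap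

/-- `Φ(L) = (id ⊗ g) ∘ (L ⊗ id) ∘ P : V ⊗ V → V`. -/
noncomputable def Phi {V : Type} [AddCommGroup V] [Module ℂ V]
    (g : V ⊗[ℂ] V →ₗ[ℂ] ℂ) (P : Module.End ℂ (V ⊗[ℂ] V))
    (L : V →ₗ[ℂ] V ⊗[ℂ] V) : V ⊗[ℂ] V →ₗ[ℂ] V :=
  contract g ∘ₗ (TensorProduct.map L LinearMap.id) ∘ₗ P

/-- `id ⊗ P` on `(V ⊗ V) ⊗ V`, acting on the last two tensor factors. -/
noncomputable def op23 {V : Type} [AddCommGroup V] [Module ℂ V]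
    (P : Module.End ℂ (V ⊗[ℂ] V)) : Module.End ℂ ((V ⊗[ℂ] V) ⊗[ℂ] V) :=
  (TensorProduct.assoc ℂ V V V).symm.toLinearMap ∘ₗ
    (TensorProduct.map LinearMap.id P) ∘ₗ (TensorProduct.assoc ℂ V V V).toLinearMap

/-- The subspace `S ⊗ V` of `(V ⊗ V) ⊗ V`, for `S ⊆ V ⊗ V`. -/
noncomputable def subSV {V : Type} [AddCommGroup V] [Module ℂ V]
    (S : Submodule ℂ (V ⊗[ℂ] V)) : Submodule ℂ ((V ⊗[ℂ] V) ⊗[ℂ] V) :=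
  LinearMap.range (TensorProduct.map S.subtype (LinearMap.id (R := ℂ) (M := V)))

/-- The subspace `V ⊗ S` of `(V ⊗ V) ⊗ V`, for `S ⊆ V ⊗ V`. -/
noncomputable def subVS {V : Type} [AddCommGroup V] [Module ℂ V]
    (S : Submodule ℂ (V ⊗[ℂ] V)) : Submodule ℂ ((V ⊗[ℂ] V) ⊗[ℂ] V) :=
  LinearMap.range ((TensorProduct.assoc ℂ V V V).symm.toLinearMap ∘ₗ
    TensorProduct.map (LinearMap.id (R := ℂ) (M := V)) S.subtype)


section

open TensorProduct Module LinearMap Function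

theorem bijOn_range_iff_bijective {α β γ : Type*} {F : γ → γ} {f₁ : α → γ} {f₂ : β → γ}
    {q : α → β} (h₁ : Injective f₁) (h₂ : Injective f₂) (hc : ∀ x, F (f₁ x) = f₂ (q x)) :
    Set.BijOn F (Set.range f₁) (Set.range f₂) ↔ Bijective q := by
  constructor
  · rintro ⟨-, hinj, hsurj⟩
    refine ⟨fun x y hxy => h₁ (hinj ⟨x, rfl⟩ ⟨y, rfl⟩ (by rw [hc, hc, hxy])), fun y => ?_⟩
    obtain ⟨_, ⟨x, rfl⟩, hx⟩ := hsurj ⟨y, rfl⟩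
    exact ⟨x, h₂ (by rw [← hc, hx])⟩
  · rintro ⟨qinj, qsurj⟩
    refine ⟨?_, ?_, ?_⟩
    · rintro _ ⟨x, rfl⟩
      exact ⟨q x, (hc x).symm⟩
    · rintro _ ⟨x, rfl⟩ _ ⟨y, rfl⟩ hxy
      rw [hc, hc] at hxy
      rw [qinj (h₂ hxy)]
    · rintro _ ⟨y, rfl⟩
      obtain ⟨x, rfl⟩ := qsurj y
      exact ⟨f₁ x, ⟨x, rfl⟩, hc x⟩

theorem Submodule.bijective_subtype_comp {R V W : Type*} [Semiring R] [AddCommMonoid V]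
    [AddCommMonoid W] [Module R V] [Module R W] (S : Submodule R W) :
    Bijective fun f : V →ₗ[R] S =>
      (⟨S.subtype ∘ₗ f, fun v => (f v).2⟩ : {L : V →ₗ[R] W // ∀ v, L v ∈ S}) :=
  ⟨fun _ _ h => LinearMap.ext fun v => Subtype.ext congr($(congrArg Subtype.val h) v),
    fun L => ⟨codRestrict S L.1 L.2, rfl⟩⟩

theorem curry_comp_map_range_subtype_bijective {K M : Type*} [Field K] [AddCommGroup M]
    [Module K M] [FiniteDimensional K M] {B : M ⊗[K] M →ₗ[K] K} (hB : Injective (curry B))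
    {P : Module.End K M} (hP : P * P = P) (hsa : ∀ x y, B (P x ⊗ₜ y) = B (x ⊗ₜ P y)) :
    Bijective (curry (B ∘ₗ map (range P).subtype (range P).subtype)) := by
  have hinj : Injective (curry (B ∘ₗ map (range P).subtype (range P).subtype)) := by
    refine (injective_iff_map_eq_zero _).2 fun s hs => Subtype.ext (hB ?_)
    ext y
    have hPs : P s = s := (IsIdempotentElem.mem_range_iff hP).1 s.2
    calc B (s ⊗ₜ y) = B (s ⊗ₜ P y) := by rw [← hsa, hPs]
      _ = curry (B ∘ₗ map (range P).subtype (range P).subtype) s ⟨P y, mem_range_self P y⟩ := rfl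
      _ = curry B 0 y := by simp [hs]
  exact ⟨hinj, (injective_iff_surjective_of_finrank_eq_finrank Subspace.dual_finrank_eq.symm).1 hinj⟩

variable {R : Type*} [CommRing R] {V : Type*} [AddCommGroup V] [Module R V]

theorem curry_bijective_of_isUnit_gram {ι : Type*} [Fintype ι] [DecidableEq ι]
    (b : Basis ι R V) (g : V ⊗[R] V →ₗ[R] R)
    (hG : IsUnit (Matrix.of fun i j => g (b i ⊗ₜ[R] b j))) : Bijective (curry g) := by
  have hmat : toMatrix b b.dualBasis (curry g) =
      (Matrix.of fun i j => g (b i ⊗ₜ[R] b j)).transpose := by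
    ext i j
    simp [toMatrix_apply, Basis.dualBasis_repr]
  have hdet : IsUnit (toMatrix b b.dualBasis (curry g)).det := by
    rwa [hmat, Matrix.det_transpose, ← Matrix.isUnit_iff_isUnit_det]
  exact (LinearEquiv.ofIsUnitDet hdet).bijective

theorem curry_bijective_of_induced_form [Module.Free R V] [Module.Finite R V]
    {g : V ⊗[R] V →ₗ[R] R} (hg : Bijective (curry g))
    {g2 : (V ⊗[R] V) ⊗[R] (V ⊗[R] V) →ₗ[R] R}
    (hg2 : ∀ a c d e : V, g2 ((a ⊗ₜ c) ⊗ₜ (d ⊗ₜ e)) = g (c ⊗ₜ d) * g (a ⊗ₜ e)) :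
    Bijective (curry g2) := by
  let φ := LinearEquiv.ofBijective _ hg
  have hfactor : curry g2 = (TensorProduct.comm R V V ≪≫ₗ congr φ φ ≪≫ₗ dualDistribEquiv R V V :
      V ⊗[R] V →ₗ[R] Dual R (V ⊗[R] V)) := by
    ext a c d e
    simp [φ, hg2]
  rw [hfactor]
  exact LinearEquiv.bijective _

variable {N X : Type*} [AddCommGroup N] [Module R N] [Module.Free R N] [Module.Finite R N]
  [AddCommGroup X] [Module R X]

noncomputable def tensorEquivHomOfDualEquiv (e : N ≃ₗ[R] Dual R N) :
    X ⊗[R] N ≃ₗ[R] (N →ₗ[R] X) :=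
  congr (LinearEquiv.refl R X) e ≪≫ₗ TensorProduct.comm R X (Dual R N) ≪≫ₗ
    dualTensorHomEquiv R N X

@[simp]
theorem tensorEquivHomOfDualEquiv_tmul_apply (e : N ≃ₗ[R] Dual R N) (x : X) (n n' : N) :
    tensorEquivHomOfDualEquiv e (x ⊗ₜ n) n' = e n n' • x := by
  simp [tensorEquivHomOfDualEquiv]

noncomputable def contractWith {Y : Type*} [AddCommGroup Y] [Module R Y]
    (h : X ⊗[R] Y →ₗ[R] R) : (V ⊗[R] X) ⊗[R] Y →ₗ[R] V :=
  (TensorProduct.rid R V).toLinearMap ∘ₗ map id h ∘ₗ (TensorProduct.assoc R V X Y).toLinearMap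

@[simp]
theorem contractWith_tmul {Y : Type*} [AddCommGroup Y] [Module R Y] (h : X ⊗[R] Y →ₗ[R] R)
    (v : V) (x : X) (y : Y) : contractWith h ((v ⊗ₜ x) ⊗ₜ y) = h (x ⊗ₜ y) • v := by
  simp [contractWith]

theorem contractWith_lTensor_tmul {h : X ⊗[R] X →ₗ[R] R} {P : Module.End R X}
    (hsa : ∀ x y, h (P x ⊗ₜ y) = h (x ⊗ₜ P y)) (w : V ⊗[R] X) (y : X) :
    contractWith h (lTensor V P w ⊗ₜ y) = contractWith h (w ⊗ₜ P y) := by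
  induction w using TensorProduct.induction_on with
  | zero => simp
  | tmul v x => simp [hsa]
  | add w₁ w₂ h₁ h₂ => simp [add_tmul, h₁, h₂]

theorem tensorEquivHomOfDualEquiv_apply {e : N ≃ₗ[R] Dual R N} {h : X ⊗[R] X →ₗ[R] R}
    {ι : N →ₗ[R] X} (he : ∀ n n', e n n' = h (ι n ⊗ₜ ι n')) (r : V ⊗[R] N) (n : N) :
    tensorEquivHomOfDualEquiv e r n = contractWith h (lTensor V ι r ⊗ₜ ι n) := by
  induction r using TensorProduct.induction_on with
  | zero => simp
  | tmul v m => simp [he]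
  | add r₁ r₂ h₁ h₂ => simp [add_tmul, h₁, h₂]

end

section

open TensorProduct Module LinearMap

variable {V : Type} [AddCommGroup V] [Module ℂ V]

theorem contract_eq_contractWith (g : V ⊗[ℂ] V →ₗ[ℂ] ℂ) : contract g = contractWith g := rfl

theorem contract_map_smulRight_curry {g : V ⊗[ℂ] V →ₗ[ℂ] ℂ}
    {g2 : (V ⊗[ℂ] V) ⊗[ℂ] (V ⊗[ℂ] V) →ₗ[ℂ] ℂ}
    (hg2 : ∀ a c d e : V, g2 ((a ⊗ₜ c) ⊗ₜ (d ⊗ₜ e)) = g (c ⊗ₜ d) * g (a ⊗ₜ e))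
    (x : V ⊗[ℂ] V) (u : V) (z : V ⊗[ℂ] V) :
    contract g (map ((curry g u).smulRight x) id z) =
      contractWith g2 (TensorProduct.assoc ℂ V V V (x ⊗ₜ u) ⊗ₜ z) := by
  induction z using TensorProduct.induction_on with
  | zero => simp
  | tmul d e =>
    induction x using TensorProduct.induction_on with
    | zero => simp
    | tmul a c => simp [contract_eq_contractWith, ← smul_tmul', hg2, smul_smul]
    | add x₁ x₂ h₁ h₂ => simp_all [add_tmul]
  | add z₁ z₂ h₁ h₂ => simp [tmul_add, h₁, h₂]

theorem Phi_add (g : V ⊗[ℂ] V →ₗ[ℂ] ℂ) (P : Module.End ℂ (V ⊗[ℂ] V))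
    (L₁ L₂ : V →ₗ[ℂ] V ⊗[ℂ] V) : Phi g P (L₁ + L₂) = Phi g P L₁ + Phi g P L₂ := by
  simp only [Phi, map_add_left, add_comp, comp_add]

noncomputable def restrictOp23 (P : Module.End ℂ (V ⊗[ℂ] V)) :
    range P ⊗[ℂ] V →ₗ[ℂ] V ⊗[ℂ] range P :=
  lTensor V P.rangeRestrict ∘ₗ (TensorProduct.assoc ℂ V V V).toLinearMap ∘ₗ
    rTensor V (range P).subtype

theorem lTensor_subtype_restrictOp23 (P : Module.End ℂ (V ⊗[ℂ] V)) (x : range P ⊗[ℂ] V) :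
    lTensor V (range P).subtype (restrictOp23 P x) =
      lTensor V P (TensorProduct.assoc ℂ V V V (rTensor V (range P).subtype x)) := by
  have hP : (range P).subtype ∘ₗ P.rangeRestrict = P := subtype_comp_codRestrict _ _ _
  simp only [restrictOp23, comp_apply, ← lTensor_comp_apply, hP, LinearEquiv.coe_coe]

theorem op23_rTensor_subtype (P : Module.End ℂ (V ⊗[ℂ] V)) (x : range P ⊗[ℂ] V) :
    op23 P (rTensor V (range P).subtype x) = ((TensorProduct.assoc ℂ V V V).symm.toLinearMap ∘ₗ
      lTensor V (range P).subtype) (restrictOp23 P x) := by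
  rw [comp_apply, lTensor_subtype_restrictOp23]
  rfl

theorem Phi_comp_subtype_eq_restrictOp23 [FiniteDimensional ℂ V] {g : V ⊗[ℂ] V →ₗ[ℂ] ℂ}
    {g2 : (V ⊗[ℂ] V) ⊗[ℂ] (V ⊗[ℂ] V) →ₗ[ℂ] ℂ}
    (hg2 : ∀ a c d e : V, g2 ((a ⊗ₜ c) ⊗ₜ (d ⊗ₜ e)) = g (c ⊗ₜ d) * g (a ⊗ₜ e))
    {P : Module.End ℂ (V ⊗[ℂ] V)} (hsa : ∀ x y, g2 (P x ⊗ₜ y) = g2 (x ⊗ₜ P y))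
    {e₁ : V ≃ₗ[ℂ] Dual ℂ V} (he₁ : ∀ u v, e₁ u v = g (u ⊗ₜ v))
    {e₂ : range P ≃ₗ[ℂ] Dual ℂ (range P)} (he₂ : ∀ s s', e₂ s s' = g2 (s.1 ⊗ₜ s'.1))
    (t : range P ⊗[ℂ] V) :
    Phi g P ((range P).subtype ∘ₗ tensorEquivHomOfDualEquiv e₁ t) ∘ₗ (range P).subtype =
      tensorEquivHomOfDualEquiv e₂ (restrictOp23 P t) := by
  ext s'
  rw [comp_apply, tensorEquivHomOfDualEquiv_apply (ι := (range P).subtype) he₂,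
    lTensor_subtype_restrictOp23, contractWith_lTensor_tmul hsa]
  induction t using TensorProduct.induction_on with
  | zero => simp [Phi]
  | tmul s u =>
    have hL : (range P).subtype ∘ₗ tensorEquivHomOfDualEquiv e₁ (s ⊗ₜ u) =
        (curry g u).smulRight s.1 := by
      ext v
      simp [he₁]
    rw [hL, Phi, comp_apply, comp_apply, contract_map_smulRight_curry hg2]
    rfl
  | add t₁ t₂ h₁ h₂ => simp_all [comp_add, Phi_add, add_tmul]

end

/-- For a non-degenerate `g`, a `g⁽²⁾`-self-adjoint idempotent `P` with range `S`, the map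
`Φ : Hom(V, S) → Hom(S, V)`, `Φ(L) = (id ⊗ g)(L ⊗ id)P|_S`, is a linear isomorphism if and
only if `P₂₃ = id ⊗ P` restricts to a linear isomorphism from `S ⊗ V` onto `V ⊗ S`. -/
theorem stmt13 {n : ℕ} {V : Type} [AddCommGroup V] [Module ℂ V]
    (b : Module.Basis (Fin n) ℂ V)
    (g : V ⊗[ℂ] V →ₗ[ℂ] ℂ)
    (hG : IsUnit (Matrix.of fun i j => g (b i ⊗ₜ[ℂ] b j)))
    (g2 : (V ⊗[ℂ] V) ⊗[ℂ] (V ⊗[ℂ] V) →ₗ[ℂ] ℂ)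
    (hg2 : ∀ a c d e : V,
      g2 ((a ⊗ₜ[ℂ] c) ⊗ₜ[ℂ] (d ⊗ₜ[ℂ] e)) = g (c ⊗ₜ[ℂ] d) * g (a ⊗ₜ[ℂ] e))
    (P : Module.End ℂ (V ⊗[ℂ] V))
    (hPidem : P * P = P)
    (hsa : ∀ x y : V ⊗[ℂ] V, g2 (P x ⊗ₜ[ℂ] y) = g2 (x ⊗ₜ[ℂ] P y)) :
    Function.Bijective
      (fun L : {L : V →ₗ[ℂ] V ⊗[ℂ] V // ∀ v, L v ∈ LinearMap.range P} =>
        (Phi g P L.1) ∘ₗ (LinearMap.range P).subtype) ↔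
    Set.BijOn (fun x => op23 P x)
      (subSV (LinearMap.range P) : Set ((V ⊗[ℂ] V) ⊗[ℂ] V))
      (subVS (LinearMap.range P) : Set ((V ⊗[ℂ] V) ⊗[ℂ] V)) := by
  have := Module.Finite.of_basis b
  set S := LinearMap.range P
  have hg := curry_bijective_of_isUnit_gram b g hG
  have hgS := curry_comp_map_range_subtype_bijective
    (curry_bijective_of_induced_form hg hg2).injective hPidem hsa
  let A := tensorEquivHomOfDualEquiv (X := S) (LinearEquiv.ofBijective _ hg)
  let B := tensorEquivHomOfDualEquiv (X := V) (LinearEquiv.ofBijective _ hgS)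
  have hcomm : (fun L : {L : V →ₗ[ℂ] V ⊗[ℂ] V // ∀ v, L v ∈ S} => Phi g P L.1 ∘ₗ S.subtype) ∘
      (fun f => ⟨S.subtype ∘ₗ f, fun v => (f v).2⟩) ∘ A = B ∘ restrictOp23 P :=
    funext <| Phi_comp_subtype_eq_restrictOp23 hg2 hsa (fun _ _ => rfl) (fun _ _ => rfl)
  rw [← Function.Bijective.of_comp_iff _ (S.bijective_subtype_comp.comp A.bijective), hcomm,
    Function.Bijective.of_comp_iff' B.bijective, subSV, subVS, LinearMap.coe_range,
    LinearMap.coe_range]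
  refine (bijOn_range_iff_bijective (q := restrictOp23 P) ?_ ?_ (op23_rTensor_subtype P)).symm
  · exact Module.Flat.rTensor_preserves_injective_linearMap _ S.injective_subtype
  · exact (TensorProduct.assoc ℂ V V V).symm.injective.comp
      (Module.Flat.lTensor_preserves_injective_linearMap _ S.injective_subtype)
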